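/- Let A be a Nelson lattice and H* = {a ∈ A : a² = a}. With operations a ∨* b = (a ∨ b)², a ∧* b = (a ∧ b)², a ⇀* b = (a² ⇒ b)², together with ⊥ and ⊤, the structure H* is a Heyting algebra. -/

import Mathlib

/-- A Nelson (residuated) lattice: a bounded lattice with a commutative monoid
operation `mul` (unit `⊤`) residuated by `imp`, which is involutive
(`∼∼a = a` where `∼a = a ⇒ ⊥`) and satisfies the Nelson identity
`((a² ⇒ b) ⊓ ((∼b)² ⇒ ∼a)) ⇒ (a ⇒ b) = ⊤`. -/
structure NelsonStruct (A : Type*) [Lattice A] [BoundedOrder A] where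
  mul : A → A → A
  imp : A → A → A
  mul_comm : ∀ a b, mul a b = mul b a
  mul_assoc : ∀ a b c, mul (mul a b) c = mul a (mul b c)
  top_mul : ∀ a, mul ⊤ a = a
  res : ∀ a b c, mul a b ≤ c ↔ b ≤ imp a c
  involutive : ∀ a, imp (imp a ⊥) ⊥ = a
  nelson : ∀ a b,
    imp ((imp (mul a a) b) ⊓
         (imp (mul (imp b ⊥) (imp b ⊥)) (imp a ⊥))) (imp a b) = ⊤

namespace NelsonStruct

variable {A : Type*} [Lattice A] [BoundedOrder A] (N : NelsonStruct A)

/-- The square `a² = a * a`. -/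
def sq (a : A) : A := N.mul a a

/-- The strong negation `∼a = a ⇒ ⊥`. -/
def sneg (a : A) : A := N.imp a ⊥

end NelsonStruct

/-! Squaring is an interior operator on a Nelson lattice: `a² ≤ a`, it is monotone, and it is
idempotent because Nelson lattices are 3-potent. For `x ∈ H*` this gives `x ≤ b² ↔ x ≤ b`, so
`(a ⊓ b)²` and `(a ⊔ b)²` are the meet and join of `H*` for the order of `A`. Moreover on `H*` the
meet `(a ⊓ b)²` is the product `a * b`, so `⇀*` inherits residuation from `⇒`. -/

namespace NelsonStruct

variable {A : Type*} [Lattice A] [BoundedOrder A] (N : NelsonStruct A)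

local infixl:70 " ⊙ " => N.mul

section Residuated

theorem mul_top (a : A) : a ⊙ ⊤ = a := by rw [N.mul_comm, N.top_mul]

theorem le_iff_top_le_imp {a b : A} : a ≤ b ↔ ⊤ ≤ N.imp a b := by
  rw [← N.res, mul_top]

theorem mul_le_mul_left {b c : A} (h : b ≤ c) (a : A) : a ⊙ b ≤ a ⊙ c :=
  (N.res a b _).2 (h.trans ((N.res a c _).1 le_rfl))

theorem mul_le_mul {a b c d : A} (h₁ : a ≤ b) (h₂ : c ≤ d) : a ⊙ c ≤ b ⊙ d := by
  refine (N.mul_le_mul_left h₂ a).trans ?_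
  rw [N.mul_comm a, N.mul_comm b]
  exact N.mul_le_mul_left h₁ d

theorem mul_le_left (a b : A) : a ⊙ b ≤ a := by
  simpa only [mul_top] using N.mul_le_mul_left le_top a

theorem mul_le_right (a b : A) : a ⊙ b ≤ b := by
  rw [N.mul_comm]; exact N.mul_le_left b a

theorem mul_left_comm (a b c : A) : a ⊙ (b ⊙ c) = b ⊙ (a ⊙ c) := by
  rw [← N.mul_assoc, N.mul_comm a b, N.mul_assoc]

theorem mul_mul_mul_comm (a b c d : A) : a ⊙ b ⊙ (c ⊙ d) = a ⊙ c ⊙ (b ⊙ d) := by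
  rw [N.mul_assoc, N.mul_left_comm b c d, ← N.mul_assoc]

theorem le_sneg_iff {a b : A} : a ≤ N.sneg b ↔ b ⊙ a ≤ ⊥ := (N.res b a ⊥).symm

theorem sq_le (a : A) : N.sq a ≤ a := N.mul_le_left a a

theorem sq_mono {a b : A} (h : a ≤ b) : N.sq a ≤ N.sq b := N.mul_le_mul h h

theorem sq_mul (a b : A) : N.sq (a ⊙ b) = N.sq a ⊙ N.sq b := N.mul_mul_mul_comm a b a b

theorem sq_bot : N.sq (⊥ : A) = ⊥ := le_bot_iff.1 (N.sq_le ⊥)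

theorem sq_top : N.sq (⊤ : A) = ⊤ := N.top_mul ⊤

end Residuated

section Nelson

theorem le_of_sq_le_of_sq_sneg_le {a b : A} (h₁ : N.sq a ≤ b)
    (h₂ : N.sq (N.sneg b) ≤ N.sneg a) : a ≤ b :=
  N.le_iff_top_le_imp.2 <| (le_inf (N.le_iff_top_le_imp.1 h₁) (N.le_iff_top_le_imp.1 h₂)).trans
    (N.le_iff_top_le_imp.2 (N.nelson a b).ge)

theorem mul_le_bot_of_sq_mul_of_mul_sq {x z : A} (h₁ : N.sq x ⊙ z ≤ ⊥)
    (h₂ : x ⊙ N.sq z ≤ ⊥) : x ⊙ z ≤ ⊥ := by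
  rw [N.mul_comm, ← le_sneg_iff]
  refine N.le_of_sq_le_of_sq_sneg_le ?_ ?_
  · rwa [le_sneg_iff, N.mul_comm]
  · rwa [sneg, sneg, N.involutive, le_sneg_iff]

theorem mul_mul_le_bot_of_sq_mul_mul {x y v : A} (hyx : y ≤ x)
    (h : N.sq x ⊙ (y ⊙ v) ≤ ⊥) : x ⊙ (y ⊙ v) ≤ ⊥ := by
  refine N.mul_le_bot_of_sq_mul_of_mul_sq h (le_trans ?_ h)
  calc x ⊙ N.sq (y ⊙ v) = x ⊙ (N.sq y ⊙ N.sq v) := by rw [sq_mul]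
    _ ≤ x ⊙ (x ⊙ y ⊙ v) :=
      N.mul_le_mul_left (N.mul_le_mul (N.mul_le_mul hyx le_rfl) (N.sq_le v)) x
    _ = N.sq x ⊙ (y ⊙ v) := by rw [sq, N.mul_assoc x x, N.mul_assoc x y]

/-- With `w = ∼x⁴` we have `x⁴w ≤ ⊥`; two uses of the Nelson identity lower this to `x²w² ≤ ⊥`,
i.e. `(∼x⁴)² ≤ ∼x²`, and a third gives `x² ≤ x⁴ ≤ x³`. -/
theorem sq_mul_self (x : A) : N.sq x ⊙ x = N.sq x := by
  set w := N.sneg (N.sq (N.sq x))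
  have h₄ : N.sq (N.sq x) ⊙ N.sq w ≤ ⊥ :=
    (N.mul_le_mul_left (N.sq_le w) _).trans (N.le_sneg_iff.1 le_rfl)
  have h₃ : x ⊙ (N.sq x ⊙ N.sq w) ≤ ⊥ :=
    N.mul_mul_le_bot_of_sq_mul_mul (N.sq_le x) (by rwa [← N.mul_assoc])
  have h₂ : N.sq x ⊙ N.sq w ≤ ⊥ := (N.mul_assoc x x _).trans_le
    (N.mul_mul_le_bot_of_sq_mul_mul le_rfl (by rwa [N.mul_left_comm]))
  have h_le : N.sq x ≤ N.sq (N.sq x) :=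
    N.le_of_sq_le_of_sq_sneg_le le_rfl (N.le_sneg_iff.2 h₂)
  exact le_antisymm (N.mul_le_left _ x) (h_le.trans (N.mul_le_mul_left (N.sq_le x) _))

theorem sq_sq (a : A) : N.sq (N.sq a) = N.sq a :=
  calc N.sq (N.sq a) = N.sq a ⊙ a ⊙ a := (N.mul_assoc _ a a).symm
    _ = N.sq a := by rw [N.sq_mul_self, N.sq_mul_self]

end Nelson

section Idempotents

variable {N}

theorem le_sq_iff {x : A} (hx : N.sq x = x) {a : A} : x ≤ N.sq a ↔ x ≤ a :=
  ⟨fun h => h.trans (N.sq_le a), fun h => hx ▸ N.sq_mono h⟩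

theorem sq_sup_le_iff {a b d : A} (ha : N.sq a = a) (hb : N.sq b = b) (hd : N.sq d = d) :
    N.sq (a ⊔ b) ≤ d ↔ a ≤ d ∧ b ≤ d :=
  ⟨fun h => ⟨((le_sq_iff ha).2 le_sup_left).trans h, ((le_sq_iff hb).2 le_sup_right).trans h⟩,
    fun h => hd ▸ N.sq_mono (sup_le h.1 h.2)⟩

theorem le_sq_inf_iff {x : A} (hx : N.sq x = x) {a b : A} : x ≤ N.sq (a ⊓ b) ↔ x ≤ a ∧ x ≤ b :=
  (le_sq_iff hx).trans le_inf_iff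

theorem sq_inf_eq_iff {x : A} (hx : N.sq x = x) {y : A} : N.sq (x ⊓ y) = x ↔ x ≤ y :=
  ⟨fun h => h ▸ (N.sq_le _).trans inf_le_right, fun h => by rw [inf_eq_left.2 h, hx]⟩

theorem sq_inf_eq_mul {a b : A} (ha : N.sq a = a) (hb : N.sq b = b) :
    N.sq (a ⊓ b) = a ⊙ b := by
  refine le_antisymm (N.mul_le_mul inf_le_left inf_le_right) ?_
  have hab : N.sq (a ⊙ b) = a ⊙ b := by rw [sq_mul, ha, hb]
  exact (le_sq_iff hab).2 (le_inf (N.mul_le_left a b) (N.mul_le_right a b))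

theorem sq_inf_le_iff_le_sq_imp {a b c : A} (ha : N.sq a = a) (hc : N.sq c = c) :
    N.sq (a ⊓ c) ≤ b ↔ c ≤ N.sq (N.imp a b) := by
  rw [sq_inf_eq_mul ha hc, N.res, le_sq_iff hc]

theorem sq_inf_assoc (a b c : A) : N.sq (N.sq (a ⊓ b) ⊓ c) = N.sq (a ⊓ N.sq (b ⊓ c)) := by
  have key : ∀ z, N.sq z = z → (z ≤ N.sq (N.sq (a ⊓ b) ⊓ c) ↔ z ≤ N.sq (a ⊓ N.sq (b ⊓ c))) :=
    fun z hz => by simp only [le_sq_inf_iff hz, and_assoc]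
  exact le_antisymm ((key _ (N.sq_sq _)).1 le_rfl) ((key _ (N.sq_sq _)).2 le_rfl)

theorem sq_sup_assoc {a b c : A} (ha : N.sq a = a) (hb : N.sq b = b) (hc : N.sq c = c) :
    N.sq (N.sq (a ⊔ b) ⊔ c) = N.sq (a ⊔ N.sq (b ⊔ c)) := by
  have key : ∀ d, N.sq d = d → (N.sq (N.sq (a ⊔ b) ⊔ c) ≤ d ↔ N.sq (a ⊔ N.sq (b ⊔ c)) ≤ d) :=
    fun d hd => by
      rw [sq_sup_le_iff (N.sq_sq _) hc hd, sq_sup_le_iff ha hb hd,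
        sq_sup_le_iff ha (N.sq_sq _) hd, sq_sup_le_iff hb hc hd, and_assoc]
  exact le_antisymm ((key _ (N.sq_sq _)).2 le_rfl) ((key _ (N.sq_sq _)).1 le_rfl)

end Idempotents

end NelsonStruct

/-- For a Nelson lattice `A`, the set `H* = {a : a² = a}` with
operations `a ∨* b = (a ⊔ b)²`, `a ∧* b = (a ⊓ b)²`, `a ⇀* b = (a² ⇒ b)²`,
and the bounds `⊥`, `⊤`, is a Heyting algebra (with order `a ≤* b` iff
`a ∧* b = a`): the operations are well defined on `H*`, `∧*`/`∨*` are the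
meet/join of a bounded lattice, and `⇀*` is the residual of `∧*`. -/
theorem NelsonStruct.Hstar_is_heyting {A : Type*} [Lattice A] [BoundedOrder A]
    (N : NelsonStruct A) :
    -- closure of the operations and constants
    (∀ a b : A, N.sq a = a → N.sq b = b →
        N.sq (N.sq (a ⊓ b)) = N.sq (a ⊓ b) ∧
        N.sq (N.sq (a ⊔ b)) = N.sq (a ⊔ b) ∧
        N.sq (N.sq (N.imp (N.sq a) b)) = N.sq (N.imp (N.sq a) b)) ∧
    N.sq (⊥ : A) = ⊥ ∧ N.sq (⊤ : A) = ⊤ ∧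
    -- `∧*` and `∨*` are commutative, associative, idempotent and absorptive
    (∀ a b : A, N.sq a = a → N.sq b = b →
        N.sq (a ⊓ b) = N.sq (b ⊓ a) ∧ N.sq (a ⊔ b) = N.sq (b ⊔ a)) ∧
    (∀ a b c : A, N.sq a = a → N.sq b = b → N.sq c = c →
        N.sq (N.sq (a ⊓ b) ⊓ c) = N.sq (a ⊓ N.sq (b ⊓ c)) ∧
        N.sq (N.sq (a ⊔ b) ⊔ c) = N.sq (a ⊔ N.sq (b ⊔ c))) ∧
    (∀ a : A, N.sq a = a → N.sq (a ⊓ a) = a ∧ N.sq (a ⊔ a) = a) ∧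
    (∀ a b : A, N.sq a = a → N.sq b = b →
        N.sq (a ⊓ N.sq (a ⊔ b)) = a ∧ N.sq (a ⊔ N.sq (a ⊓ b)) = a) ∧
    -- bounds
    (∀ a : A, N.sq a = a → N.sq (a ⊓ ⊥) = ⊥ ∧ N.sq (a ⊔ ⊤) = ⊤) ∧
    -- `⇀*` is the residual of `∧*` with respect to the induced order
    (∀ a b c : A, N.sq a = a → N.sq b = b → N.sq c = c →
        (N.sq (N.sq (a ⊓ c) ⊓ b) = N.sq (a ⊓ c) ↔
          N.sq (c ⊓ N.sq (N.imp (N.sq a) b)) = c)) := by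
  refine ⟨fun a b _ _ => ⟨N.sq_sq _, N.sq_sq _, N.sq_sq _⟩, N.sq_bot, N.sq_top,
    fun a b _ _ => ⟨by rw [inf_comm], by rw [sup_comm]⟩,
    fun a b c ha hb hc => ⟨N.sq_inf_assoc a b c, sq_sup_assoc ha hb hc⟩,
    fun a ha => ⟨by rw [inf_idem, ha], by rw [sup_idem, ha]⟩,
    fun a b ha _ => ⟨(sq_inf_eq_iff ha).2 ((le_sq_iff ha).2 le_sup_left), ?_⟩,
    fun a _ => ⟨by rw [inf_bot_eq, N.sq_bot], by rw [sup_top_eq, N.sq_top]⟩,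
    fun a b c ha _ hc => ?_⟩
  · rw [sup_eq_left.2 ((N.sq_le _).trans inf_le_left), ha]
  · rw [sq_inf_eq_iff (N.sq_sq _), sq_inf_eq_iff hc, ha]
    exact sq_inf_le_iff_le_sq_imp ha hc
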